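/- arXiv:1908.10159 — 5 statements merged into one kernel-verified Lean document; each statement's English description precedes it below -/
import Mathlib

section
/- Let A : Fin (n+1) → ℤ be an array indexed 0..n (with A 0 arbitrary/ignored, entries used at indices 1..n), and define the Fenwick array F by F i = sum of A k for k in the range (i - 2^(rmb i), i] (i.e., i - 2^(rmb i) < k ≤ i), for each 1 ≤ i ≤ n. Then for every 1 ≤ i ≤ n, summing F over the nonzero elements of the sum sequence of i yields the prefix sum: F (s 0) + F (s 1) + ... + F (s (r-1)) = A 1 + A 2 + ... + A i, where s 0 = i, s (j+1) = s j - 2^(rmb (s j)), and r = popcount i. -/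
/-- Position of the least significant set bit of a positive natural. -/
def rmb (i : ℕ) : ℕ := padicValNat 2 i

/-- Number of 1-bits in the binary representation. -/
def popcount (i : ℕ) : ℕ := (Nat.bits i).count true

/-- One step of the sum sequence: clear the lowest set bit. -/
def sumStep (x : ℕ) : ℕ := x - 2 ^ rmb x

/-- The sum sequence of `i`. -/
def sumSeq (i j : ℕ) : ℕ := sumStep^[j] i

/-- One step of the update sequence. -/
def updStep (x : ℕ) : ℕ := x + 2 ^ rmb x

/-- The update sequence of `i`. -/
def updSeq (i j : ℕ) : ℕ := updStep^[j] i

/-- The Fenwick array of `A`: entry `k` sums `A` over `(k - 2^(rmb k), k]`. -/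
def fenwick (A : ℕ → ℤ) (k : ℕ) : ℤ := ∑ m ∈ Finset.Ioc (k - 2 ^ rmb k) k, A m

/-! Writing `i = 2^e (2q + 1)`, one step of the sum sequence gives `2^e (2q)`, which loses exactly
one bit; so after `popcount i` steps the sequence reaches `0`. Since `fenwick A k` is the sum of
`A` over `(sumStep k, k]`, the sum over the sequence telescopes to the sum over `(0, i]`. -/

open Finset

lemma popcount_two_mul (k : ℕ) : popcount (2 * k) = popcount k := by
  rcases eq_or_ne k 0 with rfl | hk
  · rfl
  · simp [popcount, Nat.bit0_bits k hk]

lemma popcount_two_mul_add_one (k : ℕ) : popcount (2 * k + 1) = popcount k + 1 := by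
  simp [popcount]

lemma popcount_two_pow_mul (e k : ℕ) : popcount (2 ^ e * k) = popcount k := by
  induction e with
  | zero => simp
  | succ e ih => rw [pow_succ', mul_assoc, popcount_two_mul, ih]

lemma rmb_two_pow_mul_odd (e q : ℕ) : rmb (2 ^ e * (2 * q + 1)) = e := by
  have : padicValNat 2 (2 * q + 1) = 0 := padicValNat.eq_zero_of_not_dvd (by omega)
  rw [rmb, padicValNat.mul (by positivity) (by omega), padicValNat.prime_pow, this, add_zero]

lemma popcount_sumStep_add_one {i : ℕ} (hi : i ≠ 0) : popcount (sumStep i) + 1 = popcount i := by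
  obtain ⟨e, m, ⟨q, rfl⟩, rfl⟩ := Nat.exists_eq_two_pow_mul_odd hi
  have hstep : sumStep (2 ^ e * (2 * q + 1)) = 2 ^ e * (2 * q) := by
    rw [sumStep, rmb_two_pow_mul_odd, mul_add_one, Nat.add_sub_cancel]
  rw [hstep, popcount_two_pow_mul, popcount_two_pow_mul, popcount_two_mul,
    popcount_two_mul_add_one]

lemma sumSeq_popcount (i : ℕ) : sumSeq i (popcount i) = 0 := by
  induction i using Nat.strong_induction_on with
  | _ i ih =>
    rcases eq_or_ne i 0 with rfl | hi
    · rfl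
    · have hlt : sumStep i < i :=
        Nat.sub_lt (Nat.pos_of_ne_zero hi) (Nat.two_pow_pos _)
      rw [sumSeq, ← popcount_sumStep_add_one hi, Function.iterate_succ_apply]
      exact ih _ hlt

theorem Finset.sum_range_sum_Ioc_iterate {M : Type*} [AddCommMonoid M] {f : ℕ → ℕ} (hf : f ≤ id)
    (g : ℕ → M) (x n : ℕ) :
    ∑ j ∈ range n, ∑ k ∈ Ioc (f^[j + 1] x) (f^[j] x), g k = ∑ k ∈ Ioc (f^[n] x) x, g k := by
  induction n with
  | zero => simp
  | succ n ih =>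
    have hanti := Function.antitone_iterate_of_le_id hf
    rw [sum_range_succ, ih, add_comm]
    exact sum_Ioc_consecutive _ (hanti n.le_succ x) (hanti n.zero_le x)

lemma fenwick_eq_sum_Ioc_sumStep (A : ℕ → ℤ) (k : ℕ) :
    fenwick A k = ∑ m ∈ Ioc (sumStep k) k, A m := rfl

theorem fenwick_sum_correct_general (A : ℕ → ℤ) (i : ℕ) :
    ∑ j ∈ Finset.range (popcount i), fenwick A (sumSeq i j) = ∑ k ∈ Finset.Icc 1 i, A k := by
  have hstep : sumStep ≤ id := fun x => Nat.sub_le _ _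
  simp only [fenwick_eq_sum_Ioc_sumStep, sumSeq, ← Function.iterate_succ_apply' sumStep]
  rw [sum_range_sum_Ioc_iterate hstep, ← sumSeq, sumSeq_popcount, ← Icc_add_one_left_eq_Ioc,
    zero_add]

theorem fenwick_sum_correct (n : ℕ) (A : ℕ → ℤ) (i : ℕ) (h1 : 1 ≤ i) (h2 : i ≤ n) :
    ∑ j ∈ Finset.range (popcount i), fenwick A (sumSeq i j) = ∑ k ∈ Finset.Icc 1 i, A k :=
  fenwick_sum_correct_general A i
end

section
/- Let n be a power of two and let 1 ≤ i ≤ n. Define the update sequence u 0 = i, u (j+1) = u j + 2^(rmb (u j)). Then the update sequence is strictly increasing and reaches exactly 2n after at most log2(2n) steps: there exists t ≤ log2 n + 1 with u t = 2n. -/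
/-!
Each step adds the lowest set bit `2 ^ rmb x` to `x`, which carries into a higher bit, so
`rmb` strictly increases along the sequence and `2 ^ j ≤ u j`. A term below `2 ^ k` is a
multiple of `2 ^ rmb x`, as is `2 ^ k`, so one step cannot overshoot `2 ^ k`. Hence the first
term that is at least `2 ^ k` equals `2 ^ k`, and it occurs within `k` steps.
-/

lemma Nat.add_le_of_dvd_of_dvd_of_lt {d x N : ℕ} (hx : d ∣ x) (hN : d ∣ N) (hlt : x < N) :
    x + d ≤ N := by
  obtain ⟨a, rfl⟩ := hx
  obtain ⟨b, rfl⟩ := hN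
  have hab : a < b := Nat.lt_of_mul_lt_mul_left hlt
  calc d * a + d = d * (a + 1) := by ring
    _ ≤ d * b := Nat.mul_le_mul_left d hab

lemma two_pow_rmb_dvd (x : ℕ) : 2 ^ rmb x ∣ x := pow_padicValNat_dvd

lemma two_pow_rmb_le {x : ℕ} (hx : x ≠ 0) : 2 ^ rmb x ≤ x :=
  Nat.le_of_dvd (Nat.pos_of_ne_zero hx) (two_pow_rmb_dvd x)

lemma lt_updStep (x : ℕ) : x < updStep x :=
  Nat.lt_add_of_pos_right (Nat.two_pow_pos _)

lemma rmb_lt_rmb_updStep {x : ℕ} (hx : x ≠ 0) : rmb x < rmb (updStep x) := by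
  suffices hdvd : 2 ^ (rmb x + 1) ∣ updStep x from
    (padicValNat_dvd_iff_le (lt_updStep x).ne_bot).mp hdvd
  have hnot : ¬ 2 ^ (rmb x + 1) ∣ x := pow_succ_padicValNat_not_dvd hx
  obtain ⟨m, hm⟩ := two_pow_rmb_dvd x
  rw [updStep]
  generalize rmb x = v at hm hnot ⊢
  subst hm
  -- `m` is odd, so `2 ^ v * m + 2 ^ v = 2 ^ v * (m + 1)` gains a factor of `2`
  have hm_odd : ¬ 2 ∣ m := fun ⟨c, hc⟩ => hnot ⟨c, by rw [hc, pow_succ]; ring⟩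
  obtain ⟨c, hc⟩ : 2 ∣ m + 1 := by omega
  exact ⟨c, by rw [pow_succ, mul_assoc, ← hc]; ring⟩

lemma updStep_le_two_pow {x k : ℕ} (hx : x < 2 ^ k) : updStep x ≤ 2 ^ k := by
  have hdvd : 2 ^ rmb x ∣ 2 ^ k := by
    rcases eq_or_ne x 0 with rfl | hx0
    · simp [rmb]
    · exact pow_dvd_pow 2 ((Nat.pow_lt_pow_iff_right one_lt_two).mp
        ((two_pow_rmb_le hx0).trans_lt hx)).le
  exact Nat.add_le_of_dvd_of_dvd_of_lt (two_pow_rmb_dvd x) hdvd hx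

lemma updSeq_succ (i j : ℕ) : updSeq i (j + 1) = updStep (updSeq i j) :=
  Function.iterate_succ_apply' updStep j i

lemma strictMono_updSeq (i : ℕ) : StrictMono (updSeq i) :=
  strictMono_nat_of_lt_succ fun j => updSeq_succ i j ▸ lt_updStep _

lemma updSeq_ne_zero {i : ℕ} (hi : i ≠ 0) (j : ℕ) : updSeq i j ≠ 0 :=
  ((Nat.pos_of_ne_zero hi).trans_le ((strictMono_updSeq i).monotone (Nat.zero_le j))).ne'

lemma le_rmb_updSeq {i : ℕ} (hi : i ≠ 0) (j : ℕ) : j ≤ rmb (updSeq i j) := by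
  induction j with
  | zero => exact Nat.zero_le _
  | succ j ih =>
    rw [updSeq_succ]
    exact ih.trans_lt (rmb_lt_rmb_updStep (updSeq_ne_zero hi j))

lemma two_pow_le_updSeq {i : ℕ} (hi : i ≠ 0) (j : ℕ) : 2 ^ j ≤ updSeq i j :=
  (Nat.pow_le_pow_right two_pos (le_rmb_updSeq hi j)).trans
    (two_pow_rmb_le (updSeq_ne_zero hi j))

lemma exists_updSeq_eq_two_pow {i k : ℕ} (hi : i ≠ 0) (hik : i ≤ 2 ^ k) :
    ∃ t ≤ k, updSeq i t = 2 ^ k := by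
  have hex : ∃ j, 2 ^ k ≤ updSeq i j := ⟨k, two_pow_le_updSeq hi k⟩
  refine ⟨Nat.find hex, Nat.find_min' hex (two_pow_le_updSeq hi k), ?_⟩
  refine le_antisymm ?_ (Nat.find_spec hex)
  rcases h : Nat.find hex with _ | s
  · exact hik
  · have hs : updSeq i s < 2 ^ k := not_le.mp (Nat.find_min hex (by omega))
    rw [updSeq_succ]
    exact updStep_le_two_pow hs

theorem updSeq_strictMono_and_reaches (n i : ℕ) (hn : ∃ h, n = 2 ^ h)
    (h1 : 1 ≤ i) (h2 : i ≤ n) :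
    StrictMono (updSeq i) ∧ ∃ t ≤ Nat.log2 n + 1, updSeq i t = 2 * n := by
  obtain ⟨h, rfl⟩ := hn
  rw [Nat.log2_two_pow, ← pow_succ']
  exact ⟨strictMono_updSeq i,
    exists_updSeq_eq_two_pow (by omega) (h2.trans (Nat.pow_le_pow_right two_pos h.le_succ))⟩
end

section
/- Multiplication computes prefix sums in words: let w, ℓ be naturals with ℓ ≤ w, and let X = Σ_{j=0}^{ℓ-1} x_j · 2^{w·j} with each x_j < 2^{w-1}/ℓ (so that no carries across word boundaries occur). Let C = Σ_{j=0}^{ℓ-1} 2^{w·j}. Then for each 0 ≤ j < ℓ, the j-th w-bit word of the product X · C (i.e., ⌊(X·C)/2^{w·j}⌋ mod 2^w) equals the prefix sum x_0 + x_1 + ... + x_j. -/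
/-!
Read an ultraword with words `x_j` as the value at `2 ^ w` of the polynomial `∑ x_j X^j`, and `C`
as the value of `∑_{j < ℓ} X^j`. The coefficients of the product are window sums of the `x_j`, the
`j`-th one being the prefix sum `x_0 + ⋯ + x_j` for `j < ℓ`, and all of them are at most
`∑ x_j < 2 ^ w`. A polynomial over `ℕ` whose coefficients are below `b` has them as the base-`b`
digits of its value at `b`, so word `j` of the product is the `j`-th coefficient.
-/

open Finset Polynomial

namespace Polynomial

theorem eval_div_pow_mod_eq_coeff {b : ℕ} (p : ℕ[X]) (hp : ∀ i, p.coeff i < b) (j : ℕ) :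
    p.eval b / b ^ j % b = p.coeff j := by
  have hb : 0 < b := (Nat.zero_le _).trans_lt (hp 0)
  have hsplit (q : ℕ[X]) : q.eval b = b * q.divX.eval b + q.coeff 0 := by
    conv_lhs => rw [← divX_mul_X_add q]
    simp [mul_comm]
  induction j generalizing p with
  | zero => rw [pow_zero, Nat.div_one, hsplit p, Nat.mul_add_mod, Nat.mod_eq_of_lt (hp 0)]
  | succ j ih =>
    have hdiv : p.eval b / b = (divX p).eval b := by
      rw [hsplit p, Nat.mul_add_div hb, Nat.div_eq_of_lt (hp 0), add_zero]
    rw [pow_succ', ← Nat.div_div_eq_div_mul, hdiv,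
      ih _ (fun i => by rw [coeff_divX]; exact hp _), coeff_divX]

theorem sum_coeff_le_eval_one (s : Finset ℕ) (p : ℕ[X]) : ∑ i ∈ s, p.coeff i ≤ p.eval 1 := by
  rw [eval_eq_sum, Polynomial.sum_def]
  simp only [one_pow, mul_one]
  exact sum_le_sum_of_ne_zero fun i _ hi => mem_support_iff.mpr hi

theorem coeff_mul_le_eval_one {q : ℕ[X]} (hq : ∀ i, q.coeff i ≤ 1) (p : ℕ[X]) (n : ℕ) :
    (p * q).coeff n ≤ p.eval 1 :=
  calc (p * q).coeff n = ∑ ik ∈ antidiagonal n, p.coeff ik.1 * q.coeff ik.2 := coeff_mul p q n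
    _ ≤ ∑ ik ∈ antidiagonal n, p.coeff ik.1 :=
      sum_le_sum fun _ _ => mul_le_of_le_one_right (Nat.zero_le _) (hq _)
    _ = ∑ i ∈ range (n + 1), p.coeff i :=
      Nat.sum_antidiagonal_eq_sum_range_succ (fun i _ => p.coeff i) n
    _ ≤ p.eval 1 := sum_coeff_le_eval_one _ _

end Polynomial

theorem Finset.sum_range_lt_of_forall_lt_div {ℓ N : ℕ} {x : ℕ → ℕ} (hℓ : 0 < ℓ)
    (hx : ∀ k < ℓ, x k < N / ℓ) : ∑ k ∈ range ℓ, x k < N :=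
  calc ∑ k ∈ range ℓ, x k < ∑ _k ∈ range ℓ, N / ℓ :=
        sum_lt_sum_of_nonempty (nonempty_range_iff.mpr hℓ.ne') fun k hk => hx k (mem_range.mp hk)
    _ = ℓ * (N / ℓ) := by rw [sum_const, card_range, smul_eq_mul]
    _ ≤ N := Nat.mul_div_le N ℓ

noncomputable def wordPoly (ℓ : ℕ) (x : ℕ → ℕ) : ℕ[X] := ∑ k ∈ range ℓ, C (x k) * X ^ k

theorem eval_wordPoly (ℓ : ℕ) (x : ℕ → ℕ) (b : ℕ) :
    (wordPoly ℓ x).eval b = ∑ k ∈ range ℓ, x k * b ^ k := by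
  simp [wordPoly, eval_finsetSum]

theorem coeff_wordPoly (ℓ : ℕ) (x : ℕ → ℕ) (i : ℕ) :
    (wordPoly ℓ x).coeff i = if i < ℓ then x i else 0 := by
  simp [wordPoly]

theorem coeff_wordPoly_mul_wordPoly_one {ℓ j : ℕ} (x : ℕ → ℕ) (hj : j < ℓ) :
    (wordPoly ℓ x * wordPoly ℓ 1).coeff j = ∑ k ∈ range (j + 1), x k := by
  rw [coeff_mul, Nat.sum_antidiagonal_eq_sum_range_succ
    (fun i k => (wordPoly ℓ x).coeff i * (wordPoly ℓ 1).coeff k)]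
  refine sum_congr rfl fun k hk => ?_
  have : k < ℓ := by grind
  simp [coeff_wordPoly, this, show j - k < ℓ by omega]

theorem mul_computes_prefix_sums_general (w ℓ : ℕ) (x : ℕ → ℕ)
    (hx : ∀ j < ℓ, x j < 2 ^ (w - 1) / ℓ) :
    ∀ j < ℓ,
      ((∑ k ∈ Finset.range ℓ, x k * 2 ^ (w * k)) * (∑ k ∈ Finset.range ℓ, 2 ^ (w * k)))
          / 2 ^ (w * j) % 2 ^ w = ∑ k ∈ Finset.range (j + 1), x k := by
  intro j hj
  have hsum : ∑ k ∈ range ℓ, x k < 2 ^ w :=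
    (sum_range_lt_of_forall_lt_div (by omega) hx).trans_le
      (Nat.pow_le_pow_right two_pos (Nat.sub_le w 1))
  have hcoeff : ∀ i, (wordPoly ℓ x * wordPoly ℓ 1).coeff i < 2 ^ w := fun i =>
    calc _ ≤ (wordPoly ℓ x).eval 1 :=
          coeff_mul_le_eval_one (fun k => by rw [coeff_wordPoly]; split_ifs <;> simp) _ _
      _ < 2 ^ w := by simpa [eval_wordPoly] using hsum
  have heval : (wordPoly ℓ x * wordPoly ℓ 1).eval (2 ^ w) =
      (∑ k ∈ range ℓ, x k * 2 ^ (w * k)) * ∑ k ∈ range ℓ, 2 ^ (w * k) := by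
    simp [eval_wordPoly, pow_mul]
  rw [← heval, pow_mul, eval_div_pow_mod_eq_coeff _ hcoeff, coeff_wordPoly_mul_wordPoly_one x hj]

theorem mul_computes_prefix_sums (w ℓ : ℕ) (hℓ : ℓ ≤ w) (x : ℕ → ℕ)
    (hx : ∀ j < ℓ, x j < 2 ^ (w - 1) / ℓ) :
    ∀ j < ℓ,
      ((∑ k ∈ Finset.range ℓ, x k * 2 ^ (w * k)) * (∑ k ∈ Finset.range ℓ, 2 ^ (w * k)))
          / 2 ^ (w * j) % 2 ^ w = ∑ k ∈ Finset.range (j + 1), x k :=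
  mul_computes_prefix_sums_general w ℓ x hx
end

section
/- For every positive natural i, the number of elements in the update chain of i before exceeding any power of two 2N ≥ 2i (i.e., the number of j with u j < 2N where u 0 = i, u (j+1) = u j + 2^(rmb (u j))) is at most log2(2N) - rmb(i); in particular the update sequence has length O(log N). -/
lemma rmb_pow_dvd (x : ℕ) (hx : x ≠ 0) : 2 ^ rmb x ∣ x :=
  pow_padicValNat_dvd

lemma rmb_lt_of_lt_pow {x m : ℕ} (hx : 0 < x) (h : x < 2 ^ m) : rmb x < m := by
  have h1 : 2 ^ rmb x ≤ x := Nat.le_of_dvd hx (rmb_pow_dvd x hx.ne')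
  have := lt_of_le_of_lt h1 h
  exact (Nat.pow_lt_pow_iff_right one_lt_two).mp this

lemma rmb_updStep {x : ℕ} (hx : 0 < x) : rmb x + 1 ≤ rmb (updStep x) := by
  haveI : Fact (Nat.Prime 2) := ⟨Nat.prime_two⟩
  have hx' : x ≠ 0 := hx.ne'
  set v := rmb x with hv
  obtain ⟨c, hc⟩ := rmb_pow_dvd x hx'
  have hcodd : ¬ 2 ∣ c := by
    rintro ⟨d, hd⟩
    have hdvd : 2 ^ (v + 1) ∣ x := ⟨d, by rw [hc, hd, pow_succ]; ring⟩
    have h := (padicValNat_dvd_iff_le hx').mp hdvd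
    simp only [rmb] at hv
    omega
  have h2 : 2 ∣ c + 1 := by omega
  obtain ⟨d, hd⟩ := h2
  have hdvd : 2 ^ (v + 1) ∣ x + 2 ^ v := ⟨d, by rw [hc, ← hv, ← Nat.mul_succ, Nat.succ_eq_add_one, hd, pow_succ]; ring⟩
  have hne : x + 2 ^ v ≠ 0 := by positivity
  have h := (padicValNat_dvd_iff_le hne).mp hdvd
  simp only [updStep, rmb, ← hv] at *
  exact h

lemma updSeq_pos {i : ℕ} (hi : 0 < i) (j : ℕ) : 0 < updSeq i j := by
  induction j with
  | zero => simpa [updSeq]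
  | succ j ih =>
    have : updSeq i (j + 1) = updStep (updSeq i j) := by
      simp [updSeq, Function.iterate_succ_apply']
    rw [this]
    simp only [updStep]; positivity

lemma rmb_updSeq {i : ℕ} (hi : 0 < i) (j : ℕ) : rmb i + j ≤ rmb (updSeq i j) := by
  induction j with
  | zero => simp [updSeq]
  | succ j ih =>
    have h1 : updSeq i (j + 1) = updStep (updSeq i j) := by
      simp [updSeq, Function.iterate_succ_apply']
    rw [h1]
    have := rmb_updStep (updSeq_pos hi j)
    omega

theorem updSeq_length_bound (i N : ℕ) (hi : 0 < i) (hN : ∃ m, 2 * N = 2 ^ m)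
    (hiN : 2 * i ≤ 2 * N) :
    ((Finset.range (2 * N)).filter fun j => updSeq i j < 2 * N).card ≤
      Nat.log2 (2 * N) - rmb i := by
  obtain ⟨m, hm⟩ := hN
  have hlog : Nat.log2 (2 * N) = m := by
    rw [hm, Nat.log2_eq_log_two, Nat.log_pow one_lt_two]
  rw [hlog]
  have hsub : (Finset.range (2 * N)).filter (fun j => updSeq i j < 2 * N) ⊆
      Finset.range (m - rmb i) := by
    intro j hj
    simp only [Finset.mem_filter, Finset.mem_range] at hj ⊢
    have hlt : updSeq i j < 2 ^ m := hm ▸ hj.2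
    have h1 := rmb_lt_of_lt_pow (updSeq_pos hi j) hlt
    have h2 := rmb_updSeq hi j
    omega
  calc _ ≤ (Finset.range (m - rmb i)).card := Finset.card_le_card hsub
    _ = m - rmb i := Finset.card_range _
end

section
/- Fenwick array construction correctness: define F recursively on an array A of length n = 2^h by: if n = 1 leave A unchanged; otherwise replace A[2k] by A[2k-1] + A[2k] for all k, and recurse on the subarray of even-indexed entries (A[2], A[4], ..., A[n]). Then the resulting array F satisfies F[i] = Σ_{k = i - 2^(rmb i) + 1}^{i} A[k] for every 1 ≤ i ≤ n. -/
/-- The recursive Fenwick tree construction on a (1-indexed) array of length `2^h`: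
for `h = 0` the array is unchanged; otherwise odd entries are kept, entry `2k`
becomes `A (2k-1) + A (2k)`, and the construction recurses on the even-indexed
subarray (whose `j`-th entry corresponds to original index `2j`). -/
def fenwickBuild : ℕ → (ℕ → ℤ) → (ℕ → ℤ)
  | 0, A => A
  | h + 1, A => fun i =>
      if i % 2 = 1 then A i else fenwickBuild h (fun j => A (2 * j - 1) + A (2 * j)) (i / 2)

lemma pair_sum (A : ℕ → ℤ) (a : ℕ) : ∀ m : ℕ,
    ∑ k ∈ Finset.Icc (a + 1) (a + m), (A (2 * k - 1) + A (2 * k))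
      = ∑ k ∈ Finset.Icc (2 * a + 1) (2 * a + 2 * m), A k := by
  intro m
  induction m with
  | zero => simp
  | succ m ih =>
      have h1 : a + (m + 1) = (a + m) + 1 := by ring
      have h2 : 2 * a + 2 * (m + 1) = (2 * a + 2 * m + 1) + 1 := by ring
      rw [h1, h2, Finset.sum_Icc_succ_top (by omega), Finset.sum_Icc_succ_top (by omega),
        Finset.sum_Icc_succ_top (by omega), ih]
      have e1 : 2 * (a + m + 1) - 1 = 2 * a + 2 * m + 1 := by omega
      have e2 : 2 * (a + m + 1) = 2 * a + 2 * m + 1 + 1 := by omega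
      rw [e1, e2]; ring

lemma rmb_odd {i : ℕ} (hi : i % 2 = 1) : rmb i = 0 :=
  padicValNat.eq_zero_of_not_dvd (by omega)

lemma rmb_two_mul {j : ℕ} (hj : 1 ≤ j) : rmb (2 * j) = rmb j + 1 := by
  unfold rmb
  rw [padicValNat.mul (by norm_num) (by omega), padicValNat.self (by norm_num)]
  ring

lemma pow_rmb_le {j : ℕ} (hj : 1 ≤ j) : 2 ^ rmb j ≤ j :=
  Nat.le_of_dvd (by omega) (pow_padicValNat_dvd)

theorem fenwickBuild_correct (h : ℕ) (A : ℕ → ℤ) :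
    ∀ i, 1 ≤ i → i ≤ 2 ^ h →
      fenwickBuild h A i = ∑ k ∈ Finset.Icc (i - 2 ^ rmb i + 1) i, A k := by
  induction h generalizing A with
  | zero =>
      intro i h1 h2
      have : i = 1 := by omega
      subst this
      simp [fenwickBuild, rmb, padicValNat.one]
  | succ h ih =>
      intro i h1 h2
      rcases Nat.even_or_odd i with he | ho
      · obtain ⟨j, hj⟩ := he
        have hji : i = 2 * j := by omega
        subst hji
        have hj1 : 1 ≤ j := by omega
        have hj2 : j ≤ 2 ^ h := by
          have : 2 ^ (h + 1) = 2 * 2 ^ h := by ring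
          omega
        have : fenwickBuild (h + 1) A (2 * j)
            = fenwickBuild h (fun j => A (2 * j - 1) + A (2 * j)) j := by
          show (if 2 * j % 2 = 1 then A (2 * j) else _) = _
          rw [if_neg (by omega)]
          congr 1
          omega
        rw [this, ih _ j hj1 hj2]
        have hle := pow_rmb_le hj1
        set a := j - 2 ^ rmb j with ha
        have hja : j = a + 2 ^ rmb j := by omega
        rw [rmb_two_mul hj1]
        have h2a : 2 * j - 2 ^ (rmb j + 1) + 1 = 2 * a + 1 := by
          rw [pow_succ]; omega
        have h2b : 2 * j = 2 * a + 2 * 2 ^ rmb j := by omega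
        rw [h2a, h2b, ← pair_sum, ← hja]
      · have hmod : i % 2 = 1 := Nat.odd_iff.mp ho
        have : fenwickBuild (h + 1) A i = A i := by
          show (if i % 2 = 1 then A i else _) = _
          rw [if_pos hmod]
        rw [this, rmb_odd hmod]
        simp
        rw [show i - 1 + 1 = i by omega]
        simp
end
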